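/- Let L be a pm-algebra with 0 ≠ 1 whose prime filter space is φ-connected. If Body(L) has fewer than two elements, or Body(L) = {P, φ(P)} for some prime filter P with φ(P) ≠ P, then L is subdirectly irreducible. -/

import Mathlib

/-- A pseudocomplemented De Morgan algebra (pm-algebra): a bounded distributive
lattice with a De Morgan involution `dm` and a pseudocomplement `pc`. -/
class PMAlgebra (L : Type*) extends DistribLattice L, BoundedOrder L where
  dm : L → L
  pc : L → L
  dm_dm : ∀ a : L, dm (dm a) = a
  dm_inf : ∀ a b : L, dm (a ⊓ b) = dm a ⊔ dm b
  pc_iff : ∀ a b : L, a ⊓ b = ⊥ ↔ b ≤ pc a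

namespace PMAlgebra

variable {L : Type*} [PMAlgebra L]

/-- A congruence of a pm-algebra. -/
def IsCongruence (θ : L → L → Prop) : Prop :=
  Equivalence θ ∧
  (∀ a b c d : L, θ a b → θ c d → θ (a ⊓ c) (b ⊓ d)) ∧
  (∀ a b c d : L, θ a b → θ c d → θ (a ⊔ c) (b ⊔ d)) ∧
  (∀ a b : L, θ a b → θ (dm a) (dm b)) ∧
  (∀ a b : L, θ a b → θ (pc a) (pc b))

/-- `L` is simple: it has more than one element and its only congruences are
equality and the total relation. -/
def Simple (L : Type*) [PMAlgebra L] : Prop :=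
  Nontrivial L ∧ ∀ θ : L → L → Prop, IsCongruence θ →
    θ = (fun a b => a = b) ∨ θ = (fun _ _ => True)

/-- `L` is subdirectly irreducible: there is a congruence `μ ≠ Eq` contained in
every congruence different from equality. -/
def SubdirectlyIrreducible (L : Type*) [PMAlgebra L] : Prop :=
  ∃ μ : L → L → Prop, IsCongruence μ ∧ μ ≠ (fun a b => a = b) ∧
    ∀ θ : L → L → Prop, IsCongruence θ → θ ≠ (fun a b => a = b) →
      ∀ a b : L, μ a b → θ a b

/-- A prime filter of the underlying lattice of `L`. -/
def IsPrimeFilter (P : Set L) : Prop :=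
  P.Nonempty ∧ P ≠ Set.univ ∧
  (∀ a b : L, a ∈ P → a ≤ b → b ∈ P) ∧
  (∀ a b : L, a ∈ P → b ∈ P → a ⊓ b ∈ P) ∧
  (∀ a b : L, a ⊔ b ∈ P → a ∈ P ∨ b ∈ P)

/-- The Birula–Rasiowa transformation. -/
def phi (P : Set L) : Set L := {a : L | dm a ∉ P}

/-- `P` is a maximal prime filter. -/
def IsMaximalPF (P : Set L) : Prop :=
  IsPrimeFilter P ∧ ∀ Q : Set L, IsPrimeFilter Q → P ⊆ Q → Q = P

/-- `P` is a minimal prime filter. -/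
def IsMinimalPF (P : Set L) : Prop :=
  IsPrimeFilter P ∧ ∀ Q : Set L, IsPrimeFilter Q → Q ⊆ P → Q = P

/-- The body of `L`: prime filters that are neither maximal nor minimal. -/
def body (L : Type*) [PMAlgebra L] : Set (Set L) :=
  {P : Set L | IsPrimeFilter P ∧ ¬ IsMaximalPF P ∧ ¬ IsMinimalPF P}

/-- The prime filter space of `L` is φ-connected. -/
def PhiConnected (L : Type*) [PMAlgebra L] : Prop :=
  ∀ S : Set (Set L), S ⊆ {P : Set L | IsPrimeFilter P} → S.Nonempty →
    (∀ P Q : Set L, P ∈ S → IsPrimeFilter Q → P ⊆ Q → Q ∈ S) →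
    (∀ P Q : Set L, P ∈ S → IsPrimeFilter Q → Q ⊆ P → Q ∈ S) →
    (∀ P : Set L, P ∈ S → phi P ∈ S) →
    S = {P : Set L | IsPrimeFilter P}

/-- The Kleene identity. -/
def Kleene (L : Type*) [PMAlgebra L] : Prop :=
  ∀ a b : L, a ⊓ dm a ≤ b ⊔ dm b

/-- The term `C(x) = (x ∧ x') ∨ (x ∧ x')*`. -/
def C (x : L) : L := (x ⊓ dm x) ⊔ pc (x ⊓ dm x)

/-- The term `T(x) = C(x) ∧ C(x)'`. -/
def T (x : L) : L := C x ⊓ dm (C x)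

end PMAlgebra

/-!
Prime filters separate points, so a congruence `θ ≠ Δ` leaves some prime filter that is not a
union of `θ`-classes; and if `θ` does not identify `0` and `1`, the prime filters of `L/θ` pull
back to saturated ones. Saturation passes from a prime filter up to the maximal filters above
it, down to the minimal ones below it (apply `φ`), and across `φ`; so by φ-connectedness some
filter of the body is unsaturated. If the body is empty, `L` is therefore simple. Otherwise the
relation "no maximal or minimal prime filter separates `a` and `b`" is a congruence, nontrivial
as soon as the body is nonempty. A pair it relates but `θ` does not is separated by a
`θ`-saturated prime filter, which must lie in the body `{P, φ(P)}`; then the whole body is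
saturated, a contradiction.
-/

namespace PMAlgebra

variable {L : Type*} [PMAlgebra L]

lemma inf_pc_self (a : L) : a ⊓ pc a = ⊥ := (pc_iff a (pc a)).mpr le_rfl

lemma pc_bot : pc (⊥ : L) = ⊤ := top_le_iff.mp ((pc_iff ⊥ ⊤).mp (bot_inf_eq ⊤))

lemma pc_anti {a b : L} (h : a ≤ b) : pc b ≤ pc a :=
  (pc_iff a (pc b)).mp (le_bot_iff.mp ((inf_le_inf_right _ h).trans (inf_pc_self b).le))

lemma pc_sup_pc_self_eq_bot (a : L) : pc (a ⊔ pc a) = ⊥ :=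
  le_bot_iff.mp ((le_inf (pc_anti le_sup_left) (pc_anti le_sup_right)).trans
    (inf_pc_self (pc a)).le)

lemma dm_anti {a b : L} (h : a ≤ b) : dm b ≤ dm a :=
  calc dm b ≤ dm a ⊔ dm b := le_sup_right
    _ = dm a := by rw [← dm_inf, inf_eq_left.mpr h]

lemma dm_top : dm (⊤ : L) = ⊥ := le_bot_iff.mp ((dm_anti le_top).trans (dm_dm ⊥).le)

lemma dm_bot : dm (⊥ : L) = ⊤ := top_le_iff.mp ((dm_dm ⊤).symm.le.trans (dm_anti bot_le))

lemma dm_sup (a b : L) : dm (a ⊔ b) = dm a ⊓ dm b := by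
  rw [← dm_dm (dm a ⊓ dm b), dm_inf, dm_dm, dm_dm]

namespace IsPrimeFilter

variable {P : Set L}

lemma mem_of_le (hP : IsPrimeFilter P) {a b : L} (ha : a ∈ P) (h : a ≤ b) : b ∈ P :=
  hP.2.2.1 a b ha h

lemma inf_mem (hP : IsPrimeFilter P) {a b : L} (ha : a ∈ P) (hb : b ∈ P) : a ⊓ b ∈ P :=
  hP.2.2.2.1 a b ha hb

lemma inf_mem_iff (hP : IsPrimeFilter P) {a b : L} : a ⊓ b ∈ P ↔ a ∈ P ∧ b ∈ P :=
  ⟨fun h => ⟨hP.mem_of_le h inf_le_left, hP.mem_of_le h inf_le_right⟩,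
    fun h => hP.inf_mem h.1 h.2⟩

lemma sup_mem_iff (hP : IsPrimeFilter P) {a b : L} : a ⊔ b ∈ P ↔ a ∈ P ∨ b ∈ P :=
  ⟨hP.2.2.2.2 a b, fun h => h.elim (hP.mem_of_le · le_sup_left) (hP.mem_of_le · le_sup_right)⟩

lemma top_mem (hP : IsPrimeFilter P) : ⊤ ∈ P :=
  hP.1.elim fun _ ha => hP.mem_of_le ha le_top

lemma bot_notMem (hP : IsPrimeFilter P) : ⊥ ∉ P := fun h =>
  hP.2.1 (Set.eq_univ_of_forall fun _ => hP.mem_of_le h bot_le)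

lemma pc_notMem (hP : IsPrimeFilter P) {a : L} (ha : a ∈ P) : pc a ∉ P := fun h =>
  hP.bot_notMem (inf_pc_self a ▸ hP.inf_mem ha h)

end IsPrimeFilter

lemma mem_phi {P : Set L} {a : L} : a ∈ phi P ↔ dm a ∉ P := Iff.rfl

lemma phi_phi (P : Set L) : phi (phi P) = P := by
  ext a
  simp only [mem_phi, dm_dm, not_not]

lemma phi_subset_phi {P Q : Set L} (h : P ⊆ Q) : phi Q ⊆ phi P := fun _ ha hP => ha (h hP)

lemma isPrimeFilter_phi {P : Set L} (hP : IsPrimeFilter P) : IsPrimeFilter (phi P) := by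
  refine ⟨⟨⊤, ?_⟩, fun h => ?_, fun a b ha hab hb => ?_, fun a b ha hb hab => ?_,
    fun a b hab => ?_⟩
  · rw [mem_phi, dm_top]
    exact hP.bot_notMem
  · have : (⊥ : L) ∈ phi P := h ▸ Set.mem_univ ⊥
    rw [mem_phi, dm_bot] at this
    exact this hP.top_mem
  · exact ha (hP.mem_of_le hb (dm_anti hab))
  · rw [dm_inf, hP.sup_mem_iff] at hab
    exact hab.elim ha hb
  · rw [mem_phi, dm_sup, hP.inf_mem_iff] at hab
    simpa only [mem_phi, ← not_and_or] using hab

lemma IsMinimalPF.isMaximalPF_phi {P : Set L} (h : IsMinimalPF P) : IsMaximalPF (phi P) := by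
  refine ⟨isPrimeFilter_phi h.1, fun Q hQ hPQ => ?_⟩
  have hQP : phi Q ⊆ P := phi_phi P ▸ phi_subset_phi hPQ
  rw [← h.2 _ (isPrimeFilter_phi hQ) hQP, phi_phi]

lemma IsMaximalPF.isMinimalPF_phi {P : Set L} (h : IsMaximalPF P) : IsMinimalPF (phi P) := by
  refine ⟨isPrimeFilter_phi h.1, fun Q hQ hQP => ?_⟩
  have hPQ : P ⊆ phi Q := phi_phi P ▸ phi_subset_phi hQP
  rw [← h.2 _ (isPrimeFilter_phi hQ) hPQ, phi_phi]

section Separation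

variable {M : Type*} [DistribLattice M]

lemma isPrimeFilter_preimage_compl (f : LatticeHom L M) {J : Order.Ideal M} (hJ : J.IsPrime)
    {a b : L} (ha : f a ∉ J) (hb : f b ∈ J) : IsPrimeFilter (f ⁻¹' (J : Set M)ᶜ) := by
  refine ⟨⟨a, ha⟩, fun h => ?_, fun x y hx hxy hy => hx (J.lower (OrderHomClass.mono f hxy) hy),
    fun x y hx hy hxy => ?_, fun x y hxy => ?_⟩
  · exact (h ▸ Set.mem_univ b : b ∈ f ⁻¹' (J : Set M)ᶜ) hb
  · rw [map_inf] at hxy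
    exact (hJ.mem_or_mem hxy).elim hx hy
  · by_contra! h
    have := Order.Ideal.sup_mem (not_not.mp h.1) (not_not.mp h.2)
    rw [← map_sup] at this
    exact hxy this

lemma exists_isPrimeFilter_separating (f : LatticeHom L M) {a b : L} (h : f a ≠ f b) :
    ∃ P : Set L, IsPrimeFilter P ∧ (∀ x y, f x = f y → (x ∈ P ↔ y ∈ P)) ∧
      ¬ (a ∈ P ↔ b ∈ P) := by
  wlog hab : ¬ f a ≤ f b generalizing a b
  · obtain ⟨P, hP, hsat, hsep⟩ := this h.symm fun hba => h ((not_not.mp hab).antisymm hba)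
    exact ⟨P, hP, hsat, fun hiff => hsep hiff.symm⟩
  have hdisj : Disjoint (Order.PFilter.principal (f a) : Set M) (Order.Ideal.principal (f b)) :=
    Set.disjoint_left.mpr fun x hax hxb => hab (le_trans hax hxb)
  obtain ⟨J, hJ, hbJ, haJ⟩ := DistribLattice.prime_ideal_of_disjoint_filter_ideal hdisj
  have ha : f a ∉ J := Set.disjoint_left.mp haJ (le_refl (f a))
  have hb : f b ∈ J := hbJ (Order.Ideal.mem_principal.mpr le_rfl)
  exact ⟨_, isPrimeFilter_preimage_compl f hJ ha hb,
    fun x y hxy => by simp only [Set.mem_preimage, hxy], fun hiff => hiff.mp ha hb⟩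

end Separation

def IsSaturated (θ : L → L → Prop) (P : Set L) : Prop := ∀ x y, θ x y → (x ∈ P ↔ y ∈ P)

namespace IsCongruence

variable {θ : L → L → Prop}

section QuotientLattice

variable (hθ : IsCongruence θ)

def setoid : Setoid L := ⟨θ, hθ.1⟩

/-- `L/θ` as a type synonym: `Quotient hθ.setoid` already carries Mathlib's quotient preorder,
which must not compete with the lattice order defined here. -/
def QuotientLattice : Type _ := Quotient hθ.setoid

def mk (a : L) : hθ.QuotientLattice := Quotient.mk _ a

instance : Max hθ.QuotientLattice :=
  ⟨Quotient.map₂ (· ⊔ ·) fun _ _ hab _ _ hcd => hθ.2.2.1 _ _ _ _ hab hcd⟩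

instance : Min hθ.QuotientLattice :=
  ⟨Quotient.map₂ (· ⊓ ·) fun _ _ hab _ _ hcd => hθ.2.1 _ _ _ _ hab hcd⟩

instance : Lattice hθ.QuotientLattice := Lattice.mk'
  (Quotient.ind₂ fun a b => congrArg hθ.mk (sup_comm a b))
  (Quotient.ind₂ fun a b => Quotient.ind fun c => congrArg hθ.mk (sup_assoc a b c))
  (Quotient.ind₂ fun a b => congrArg hθ.mk (inf_comm a b))
  (Quotient.ind₂ fun a b => Quotient.ind fun c => congrArg hθ.mk (inf_assoc a b c))
  (Quotient.ind₂ fun a b => congrArg hθ.mk (sup_inf_self : a ⊔ a ⊓ b = a))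
  (Quotient.ind₂ fun a b => congrArg hθ.mk (inf_sup_self : a ⊓ (a ⊔ b) = a))

instance : DistribLattice hθ.QuotientLattice where
  le_sup_inf := Quotient.ind₂ fun a b => Quotient.ind fun c =>
    (congrArg hθ.mk (sup_inf_left a b c).symm).le

def mkHom : LatticeHom L hθ.QuotientLattice where
  toFun := hθ.mk
  map_sup' _ _ := rfl
  map_inf' _ _ := rfl

end QuotientLattice

lemma exists_isSaturated_separating (hθ : IsCongruence θ) {a b : L} (h : ¬ θ a b) :
    ∃ P : Set L, IsPrimeFilter P ∧ IsSaturated θ P ∧ ¬ (a ∈ P ↔ b ∈ P) := by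
  obtain ⟨P, hP, hsat, hsep⟩ :=
    exists_isPrimeFilter_separating hθ.mkHom fun hab => h (Quotient.exact hab)
  exact ⟨P, hP, fun x y hxy => hsat x y (Quotient.sound hxy), hsep⟩

end IsCongruence

open OrderDual in
def IsPrimeFilter.toDualIdeal {P : Set L} (hP : IsPrimeFilter P) : Order.Ideal Lᵒᵈ where
  carrier := ofDual ⁻¹' P
  lower' _ _ h hy := hP.mem_of_le hy h
  nonempty' := ⟨toDual ⊤, hP.top_mem⟩
  directed' x hx y hy := ⟨toDual (ofDual x ⊓ ofDual y), hP.inf_mem hx hy, inf_le_left, inf_le_right⟩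

open OrderDual in
lemma isPrimeFilter_preimage_toDual (J : Order.Ideal Lᵒᵈ) [J.IsMaximal] :
    IsPrimeFilter (toDual ⁻¹' (J : Set Lᵒᵈ)) :=
  ⟨⟨⊤, J.bot_mem⟩, fun h => Order.Ideal.IsProper.top_notMem (I := J) inferInstance
      (show (⊥ : L) ∈ toDual ⁻¹' (J : Set Lᵒᵈ) from h ▸ Set.mem_univ _),
    fun _ _ ha h => J.lower h ha, fun _ _ ha hb => Order.Ideal.sup_mem ha hb,
    fun _ _ h => Order.Ideal.IsPrime.mem_or_mem inferInstance h⟩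

open OrderDual in
/-- Maximal prime filters are the maximal proper filters, that is, the maximal ideals of `Lᵒᵈ`. -/
lemma IsPrimeFilter.exists_isMaximalPF {Q : Set L} (hQ : IsPrimeFilter Q) {a : L}
    (ha : pc a ∉ Q) : ∃ M : Set L, IsMaximalPF M ∧ Q ⊆ M ∧ a ∈ M := by
  set I := hQ.toDualIdeal ⊔ Order.Ideal.principal (toDual a)
  have hI : I.IsProper := by
    refine Order.Ideal.isProper_of_notMem (p := toDual ⊥) fun h => ?_
    obtain ⟨q, hq, hle⟩ := (Lattice.mem_ideal_sup_principal _ _ _).mp h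
    exact ha (hQ.mem_of_le hq ((pc_iff a q).mp (le_bot_iff.mp (inf_comm a q ▸ hle))))
  obtain ⟨J, hIJ, hJ⟩ := hI.exists_le_maximal
  refine ⟨toDual ⁻¹' J, ⟨isPrimeFilter_preimage_toDual J, fun R hR hJR => ?_⟩,
    fun q hq => le_sup_left.trans hIJ hq,
    le_sup_right.trans hIJ (Order.Ideal.mem_principal.mpr le_rfl)⟩
  by_contra hne
  refine hR.2.1 (hJ.maximal_proper (J := hR.toDualIdeal)
    (lt_of_le_of_ne (fun x hx => hJR hx) fun h => hne ?_))
  ext x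
  exact (SetLike.ext_iff.mp h (toDual x)).symm

lemma IsMaximalPF.mem_or_pc_mem {M : Set L} (hM : IsMaximalPF M) (a : L) : a ∈ M ∨ pc a ∈ M := by
  refine or_iff_not_imp_right.mpr fun ha => ?_
  obtain ⟨N, hN, hMN, haN⟩ := hM.1.exists_isMaximalPF ha
  exact hM.2 N hN.1 hMN ▸ haN

lemma IsMaximalPF.mem_of_pc_eq_bot {M : Set L} (hM : IsMaximalPF M) {a : L} (ha : pc a = ⊥) :
    a ∈ M :=
  (hM.mem_or_pc_mem a).resolve_right (ha ▸ hM.1.bot_notMem)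

lemma IsPrimeFilter.pc_mem_iff {P : Set L} (hP : IsPrimeFilter P) (a : L) :
    pc a ∈ P ↔ ∀ M : Set L, IsMaximalPF M → P ⊆ M → a ∉ M := by
  refine ⟨fun h M hM hPM haM => hM.1.pc_notMem haM (hPM h), fun h => ?_⟩
  by_contra ha
  obtain ⟨M, hM, hPM, haM⟩ := hP.exists_isMaximalPF ha
  exact h M hM hPM haM

section Saturation

variable {θ : L → L → Prop}

lemma isSaturated_phi (hθ : IsCongruence θ) {P : Set L} (h : IsSaturated θ P) :
    IsSaturated θ (phi P) :=
  fun x y hxy => not_congr (h _ _ (hθ.2.2.2.1 x y hxy))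

lemma isSaturated_of_subset_isMaximalPF (hθ : IsCongruence θ) {P M : Set L}
    (hP : IsPrimeFilter P) (hsat : IsSaturated θ P) (hM : IsMaximalPF M) (hPM : P ⊆ M) :
    IsSaturated θ M := by
  have key : ∀ x y, θ x y → x ∈ M → y ∈ M := by
    intro x y hxy hx
    by_contra hy
    have hz : x ⊓ pc y ∈ M := hM.1.inf_mem hx ((hM.mem_or_pc_mem y).resolve_left hy)
    -- `x ⊓ y*` is congruent to `y ⊓ y* = 0`, so its pseudocomplement is congruent to `1`.
    have hθz : θ (pc (x ⊓ pc y)) ⊤ := by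
      have := hθ.2.2.2.2 _ _ (hθ.2.1 _ _ _ _ hxy (hθ.1.refl (pc y)))
      rwa [inf_pc_self, pc_bot] at this
    exact hM.1.pc_notMem hz (hPM ((hsat _ _ hθz).mpr hP.top_mem))
  exact fun x y hxy => ⟨key x y hxy, key y x (hθ.1.symm hxy)⟩

lemma isSaturated_of_isMinimalPF_subset (hθ : IsCongruence θ) {P N : Set L}
    (hP : IsPrimeFilter P) (hsat : IsSaturated θ P) (hN : IsMinimalPF N) (hNP : N ⊆ P) :
    IsSaturated θ N := by
  have := isSaturated_phi hθ (isSaturated_of_subset_isMaximalPF hθ (isPrimeFilter_phi hP)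
    (isSaturated_phi hθ hsat) hN.isMaximalPF_phi (phi_subset_phi hNP))
  rwa [phi_phi] at this

lemma isSaturated_of_phiConnected (hθ : IsCongruence θ) (hconn : PhiConnected L)
    (hbody : ∀ R ∈ body L, IsSaturated θ R) {P : Set L} (hP : IsPrimeFilter P)
    (hsat : IsSaturated θ P) {Q : Set L} (hQ : IsPrimeFilter Q) : IsSaturated θ Q := by
  set S := {R : Set L | IsPrimeFilter R ∧ IsSaturated θ R}
  have hS : S = {R : Set L | IsPrimeFilter R} := by
    refine hconn S (fun R hR => hR.1) ⟨P, hP, hsat⟩ (fun R T hR hT hRT => ⟨hT, ?_⟩)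
      (fun R T hR hT hTR => ⟨hT, ?_⟩) fun R hR => ⟨isPrimeFilter_phi hR.1, isSaturated_phi hθ hR.2⟩
    · by_cases hmax : IsMaximalPF T
      · exact isSaturated_of_subset_isMaximalPF hθ hR.1 hR.2 hmax hRT
      by_cases hmin : IsMinimalPF T
      · exact hmin.2 R hR.1 hRT ▸ hR.2
      exact hbody T ⟨hT, hmax, hmin⟩
    · by_cases hmin : IsMinimalPF T
      · exact isSaturated_of_isMinimalPF_subset hθ hR.1 hR.2 hmin hTR
      by_cases hmax : IsMaximalPF T
      · exact hmax.2 R hR.1 hTR ▸ hR.2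
      exact hbody T ⟨hT, hmax, hmin⟩
  exact (hS ▸ hQ : Q ∈ S).2

end Saturation

namespace IsCongruence

variable {θ : L → L → Prop}

lemma rel_of_rel_bot_top (hθ : IsCongruence θ) (h : θ ⊥ ⊤) (a b : L) : θ a b := by
  have hrel_top : ∀ c, θ c ⊤ := fun c => by
    simpa only [sup_bot_eq, sup_top_eq] using hθ.2.2.1 c c ⊥ ⊤ (hθ.1.refl c) h
  exact hθ.1.trans (hrel_top a) (hθ.1.symm (hrel_top b))

lemma eq_of_forall_isSaturated (hθ : IsCongruence θ)
    (h : ∀ P : Set L, IsPrimeFilter P → IsSaturated θ P) : θ = fun a b => a = b := by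
  funext a b
  refine propext ⟨fun hab => ?_, fun hab => hab ▸ hθ.1.refl a⟩
  by_contra hne
  obtain ⟨P, hP, -, hsep⟩ := exists_isPrimeFilter_separating (LatticeHom.id L) hne
  exact hsep (h P hP a b hab)

lemma eq_of_forall_body_isSaturated (hθ : IsCongruence θ) (hconn : PhiConnected L)
    (h : ¬ θ ⊥ ⊤) (hbody : ∀ R ∈ body L, IsSaturated θ R) : θ = fun a b => a = b := by
  obtain ⟨P, hP, hsat, -⟩ := hθ.exists_isSaturated_separating h
  exact hθ.eq_of_forall_isSaturated fun _ hQ =>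
    isSaturated_of_phiConnected hθ hconn hbody hP hsat hQ

end IsCongruence

def extremalRel (L : Type*) [PMAlgebra L] (a b : L) : Prop :=
  ∀ P : Set L, IsMaximalPF P ∨ IsMinimalPF P → (a ∈ P ↔ b ∈ P)

lemma isCongruence_extremalRel : IsCongruence (extremalRel L) := by
  refine ⟨⟨fun _ _ _ => Iff.rfl, fun h P hP => (h P hP).symm, fun h h' P hP => (h P hP).trans
    (h' P hP)⟩, fun a b c d hab hcd P hP => ?_, fun a b c d hab hcd P hP => ?_,
    fun a b hab P hP => ?_, fun a b hab P hP => ?_⟩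
  all_goals have hPf : IsPrimeFilter P := hP.elim (·.1) (·.1)
  · rw [hPf.inf_mem_iff, hPf.inf_mem_iff, hab P hP, hcd P hP]
  · rw [hPf.sup_mem_iff, hPf.sup_mem_iff, hab P hP, hcd P hP]
  · exact not_iff_not.mp (hab (phi P) (hP.symm.imp IsMinimalPF.isMaximalPF_phi
      IsMaximalPF.isMinimalPF_phi))
  · rw [hPf.pc_mem_iff, hPf.pc_mem_iff]
    exact forall_congr' fun M => forall_congr' fun hM => forall_congr' fun _ =>
      not_congr (hab M (Or.inl hM))

lemma IsPrimeFilter.exists_pc_eq_bot_notMem {P : Set L} (hP : IsPrimeFilter P)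
    (h : ¬ IsMaximalPF P) : ∃ w : L, pc w = ⊥ ∧ w ∉ P := by
  simp only [IsMaximalPF, hP, true_and, not_forall] at h
  obtain ⟨Q, hQ, hPQ, hne⟩ := h
  obtain ⟨c, hcQ, hcP⟩ := Set.exists_of_ssubset (hPQ.ssubset_of_ne (Ne.symm hne))
  refine ⟨c ⊔ pc c, pc_sup_pc_self_eq_bot c, fun h => (hP.sup_mem_iff.mp h).elim hcP fun hpc => ?_⟩
  exact hQ.pc_notMem hcQ (hPQ hpc)

/-- For `P` in the body pick `w` dense outside `P` and `s` dense outside `φ(P)`: then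
`e := s'` lies in `P` but in no minimal prime filter, while `w` lies in every maximal one, so
`e ∧ w` and `e` are related yet separated by `P`. -/
lemma extremalRel_ne_eq {P : Set L} (hP : P ∈ body L) : extremalRel L ≠ fun a b => a = b := by
  obtain ⟨w, hw, hwP⟩ := hP.1.exists_pc_eq_bot_notMem hP.2.1
  have hphi : ¬ IsMaximalPF (phi P) := fun h => hP.2.2 (phi_phi P ▸ h.isMinimalPF_phi)
  obtain ⟨s, hs, hsP⟩ := (isPrimeFilter_phi hP.1).exists_pc_eq_bot_notMem hphi
  have heP : dm s ∈ P := not_not.mp hsP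
  intro h
  have hrel : extremalRel L (dm s ⊓ w) (dm s) := by
    rintro M (hM | hM)
    · rw [hM.1.inf_mem_iff]
      exact and_iff_left (hM.mem_of_pc_eq_bot hw)
    · have hsM : dm s ∉ M := hM.isMaximalPF_phi.mem_of_pc_eq_bot hs
      exact iff_of_false (fun h => hsM (hM.1.mem_of_le h inf_le_left)) hsM
  rw [h] at hrel
  rw [← hrel] at heP
  exact hwP (hP.1.mem_of_le heP inf_le_right)

lemma exists_body_subset_pair
    (h : (body L).encard < 2 ∨ ∃ P : Set L, IsPrimeFilter P ∧ phi P ≠ P ∧ body L = {P, phi P}) :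
    ∃ Q : Set L, body L ⊆ {Q, phi Q} := by
  rcases h with h | ⟨P, -, -, hP⟩
  · rcases Set.encard_le_one_iff_eq.mp (ENat.lt_two_iff.mp h) with h | ⟨Q, hQ⟩
    · exact ⟨∅, h ▸ Set.empty_subset _⟩
    · exact ⟨Q, hQ ▸ Set.singleton_subset_iff.mpr (Set.mem_insert Q _)⟩
  · exact ⟨P, hP.le⟩

lemma forall_body_isSaturated {θ : L → L → Prop} (hθ : IsCongruence θ) {Q R : Set L}
    (hQ : body L ⊆ {Q, phi Q}) (hR : R ∈ body L) (hsat : IsSaturated θ R) :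
    ∀ S ∈ body L, IsSaturated θ S := by
  have hphi := isSaturated_phi hθ hsat
  intro S hS
  rcases hQ hR with rfl | rfl <;> rcases hQ hS with rfl | rfl
  · exact hsat
  · exact hphi
  · rwa [phi_phi] at hphi
  · exact hsat

end PMAlgebra

open PMAlgebra

/-- A nontrivial φ-connected pm-algebra whose body has fewer than two elements,
or is of the form `{P, φ(P)}` with `φ(P) ≠ P`, is subdirectly irreducible. -/
theorem subdirectlyIrreducible_of_body {L : Type*} [PMAlgebra L]
    (hnt : (⊥ : L) ≠ ⊤) (hconn : PhiConnected L)
    (hbody : (body L).encard < 2 ∨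
      ∃ P : Set L, IsPrimeFilter P ∧ phi P ≠ P ∧ body L = {P, phi P}) :
    SubdirectlyIrreducible L := by
  rcases (body L).eq_empty_or_nonempty with hempty | ⟨P, hP⟩
  · have htotal : IsCongruence fun _ _ : L => True :=
      ⟨⟨fun _ => trivial, fun _ => trivial, fun _ _ => trivial⟩, fun _ _ _ _ _ _ => trivial,
        fun _ _ _ _ _ _ => trivial, fun _ _ _ => trivial, fun _ _ _ => trivial⟩
    refine ⟨_, htotal, fun h => hnt ((congrFun₂ h ⊥ ⊤).mp trivial), fun θ hθ hne a b _ => ?_⟩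
    by_contra hab
    exact hne (hθ.eq_of_forall_body_isSaturated hconn (fun h => hab (hθ.rel_of_rel_bot_top h a b))
      (by simp [hempty]))
  · obtain ⟨Q, hQ⟩ := exists_body_subset_pair hbody
    refine ⟨extremalRel L, isCongruence_extremalRel, extremalRel_ne_eq hP,
      fun θ hθ hne a b hab => ?_⟩
    by_contra hθab
    obtain ⟨R, hR, hsat, hsep⟩ := hθ.exists_isSaturated_separating hθab
    have hRbody : R ∈ body L :=
      ⟨hR, fun hmax => hsep (hab R (Or.inl hmax)), fun hmin => hsep (hab R (Or.inr hmin))⟩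
    exact hne (hθ.eq_of_forall_body_isSaturated hconn (fun h => hθab (hθ.rel_of_rel_bot_top h a b))
      (forall_body_isSaturated hθ hQ hRbody hsat))
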